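/- arXiv:2502.00349 — 4 statements merged into one kernel-verified Lean document; each statement's English description precedes it below -/
import Mathlib

section
/- For a random variable X with quantile density function q(u) = (1-u)^(-A) (-log(1-u))^(-B) where 0 < A < 2 and B < 1, the Q-FCRE equals Γ(α - B + 1)/(2-A)^(α-B+1). -/
/-! The substitution `p = 1 - exp (-t)` turns `-log (1 - p)` into `t` and `dp` into `exp (-t) dt`,
so the integrand becomes `t ^ (α - B) * exp (-(2 - A) t)` on `(0, ∞)`, a Gamma integral. -/

open MeasureTheory Set Real

lemma image_one_sub_exp_neg_Ioi : (fun t : ℝ => 1 - exp (-t)) '' Ioi 0 = Ioo 0 1 := by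
  ext p
  simp only [mem_image, mem_Ioi, mem_Ioo]
  constructor
  · rintro ⟨t, ht, rfl⟩
    have hlt : exp (-t) < 1 := exp_lt_one_iff.mpr (neg_lt_zero.mpr ht)
    exact ⟨by linarith, by linarith [exp_pos (-t)]⟩
  · rintro ⟨hp0, hp1⟩
    refine ⟨-log (1 - p), neg_pos.mpr (log_neg (by linarith) (by linarith)), ?_⟩
    rw [neg_neg, exp_log (by linarith)]
    ring

theorem intervalIntegral_zero_one_eq_integral_Ioi_one_sub_exp_neg (f : ℝ → ℝ) :
    ∫ p in (0:ℝ)..1, f p = ∫ t in Ioi 0, exp (-t) * f (1 - exp (-t)) := by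
  have hderiv (t : ℝ) : HasDerivAt (fun t : ℝ => 1 - exp (-t)) (exp (-t)) t := by
    simpa using ((hasDerivAt_exp (-t)).comp t (hasDerivAt_neg t)).const_sub 1
  have hinj : InjOn (fun t : ℝ => 1 - exp (-t)) (Ioi 0) := fun x _ y _ hxy =>
    neg_injective (exp_injective (sub_right_injective hxy))
  rw [intervalIntegral.integral_of_le zero_le_one, integral_Ioc_eq_integral_Ioo,
    ← image_one_sub_exp_neg_Ioi, integral_image_eq_integral_abs_deriv_smul measurableSet_Ioi
      (fun t _ => (hderiv t).hasDerivWithinAt) hinj]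
  simp only [abs_of_pos (exp_pos _), smul_eq_mul]

lemma exp_neg_mul_qfcre_integrand_one_sub_exp_neg (A B α : ℝ) {t : ℝ} (ht : 0 < t) :
    exp (-t) * ((1 - (1 - exp (-t))) * (-log (1 - (1 - exp (-t)))) ^ α *
        ((1 - (1 - exp (-t))) ^ (-A) * (-log (1 - (1 - exp (-t)))) ^ (-B)))
      = t ^ (α - B + 1 - 1) * exp (-((2 - A) * t)) := by
  have hexp_rpow : exp (-t) ^ (-A) = exp (A * t) := by
    rw [← exp_mul]
    ring_nf
  simp only [sub_sub_cancel, log_exp, neg_neg, hexp_rpow]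
  rw [show α - B + 1 - 1 = α + -B by ring, rpow_add ht,
    show -((2 - A) * t) = -t + (-t + A * t) by ring, exp_add, exp_add]
  ring

theorem qfcre_general_family_general (A B α : ℝ) (hA2 : A < 2) (hB : B < 1)
    (hα0 : 0 ≤ α) :
    ∫ p in (0:ℝ)..1,
        (1 - p) * (-Real.log (1 - p)) ^ α * ((1 - p) ^ (-A) * (-Real.log (1 - p)) ^ (-B))
      = Real.Gamma (α - B + 1) / (2 - A) ^ (α - B + 1) := by
  have hrate : 0 < 2 - A := by linarith
  have hshape : 0 < α - B + 1 := by linarith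
  rw [intervalIntegral_zero_one_eq_integral_Ioi_one_sub_exp_neg,
    setIntegral_congr_fun measurableSet_Ioi
      (fun t ht => exp_neg_mul_qfcre_integrand_one_sub_exp_neg A B α ht),
    integral_rpow_mul_exp_neg_mul_Ioi hshape hrate, div_rpow zero_le_one hrate.le, one_rpow,
    one_div_mul_eq_div]

theorem qfcre_general_family (A B α : ℝ) (hA0 : 0 < A) (hA2 : A < 2) (hB : B < 1)
    (hα0 : 0 ≤ α) (hα1 : α ≤ 1) :
    ∫ p in (0:ℝ)..1,
        (1 - p) * (-Real.log (1 - p)) ^ α * ((1 - p) ^ (-A) * (-Real.log (1 - p)) ^ (-B))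
      = Real.Gamma (α - B + 1) / (2 - A) ^ (α - B + 1) :=
  qfcre_general_family_general A B α hA2 hB hα0
end

section
/- For the exponential distribution with rate λ, the quantile-based dynamic fractional cumulative residual entropy is constant in u: E_α^Q(X, u) = Γ(α+1)/λ for all u ∈ [0,1). -/
/-! Since q(p) = 1/(λ(1-p)), the integrand is λ⁻¹ (log(1-u) - log(1-p))^α. The substitutions
p = 1 - (1-u)x and x = e^{-t} turn its integral over [u,1] into (1-u) ∫₀^∞ t^α e^{-t} dt
= (1-u) Γ(α+1), and the factor 1-u cancels the normalisation 1/(1-u). -/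

open MeasureTheory Real Set

lemma image_exp_neg_Ioi_zero : (fun t : ℝ ↦ exp (-t)) '' Ioi 0 = Ioo 0 1 := by
  ext x
  constructor
  · rintro ⟨t, ht, rfl⟩
    exact ⟨exp_pos _, exp_lt_one_iff.mpr (neg_lt_zero.mpr ht)⟩
  · rintro ⟨hx0, hx1⟩
    exact ⟨-log x, neg_pos.mpr (log_neg hx0 hx1), by simp [exp_log hx0]⟩

theorem integral_Ioo_neg_log_rpow {s : ℝ} (hs : -1 < s) :
    ∫ x in Ioo 0 1, (-log x) ^ s = Gamma (s + 1) := by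
  rw [← image_exp_neg_Ioi_zero, integral_image_eq_integral_abs_deriv_smul measurableSet_Ioi
    (fun t _ ↦ (hasDerivAt_neg t).exp.hasDerivWithinAt)
    (fun a _ b _ hab ↦ neg_injective (exp_injective hab)), Gamma_eq_integral (by linarith)]
  refine setIntegral_congr_fun measurableSet_Ioi fun t _ ↦ ?_
  simp [abs_of_pos (exp_pos _)]

theorem integral_log_sub_log_one_sub_rpow {u s : ℝ} (hu : u < 1) (hs : -1 < s) :
    ∫ p in u..1, (log (1 - u) - log (1 - p)) ^ s = (1 - u) * Gamma (s + 1) := by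
  have hc : 0 < 1 - u := sub_pos.mpr hu
  have hscale : ∫ p in u..1, (log (1 - u) - log (1 - p)) ^ s
      = (1 - u) * ∫ x in (0 : ℝ)..1, (log (1 - u) - log ((1 - u) * x)) ^ s := by
    rw [intervalIntegral.integral_comp_sub_left (fun q ↦ (log (1 - u) - log q) ^ s), sub_self,
      ← smul_eq_mul,
      intervalIntegral.smul_integral_comp_mul_left (fun q ↦ (log (1 - u) - log q) ^ s), mul_zero,
      mul_one]
  rw [hscale, intervalIntegral.integral_of_le zero_le_one, integral_Ioc_eq_integral_Ioo,
    ← integral_Ioo_neg_log_rpow hs]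
  congr 1
  refine setIntegral_congr_fun measurableSet_Ioo fun x hx ↦ ?_
  rw [log_mul hc.ne' hx.1.ne', sub_add_cancel_left]

theorem qdfcre_exponential_general (lam α : ℝ) (hα0 : 0 ≤ α) :
    ∀ u ∈ Set.Ico (0:ℝ) 1,
      (1 / (1 - u)) *
          ∫ p in u..1,
            (1 - p) * (Real.log (1 - u) - Real.log (1 - p)) ^ α * (1 / (lam * (1 - p)))
        = Real.Gamma (α + 1) / lam := by
  rintro u ⟨-, hu⟩
  have hc : 1 - u ≠ 0 := (sub_pos.mpr hu).ne'
  have hcancel : ∀ p ∈ Ioo u 1,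
      (1 - p) * (log (1 - u) - log (1 - p)) ^ α * (1 / (lam * (1 - p)))
        = lam⁻¹ * (log (1 - u) - log (1 - p)) ^ α := fun p hp ↦ by
    have hp : 1 - p ≠ 0 := (sub_pos.mpr hp.2).ne'
    rw [one_div, mul_inv]
    linear_combination (lam⁻¹ * (log (1 - u) - log (1 - p)) ^ α) * mul_inv_cancel₀ hp
  rw [intervalIntegral.integral_congr_Ioo_of_le hu.le hcancel, intervalIntegral.integral_const_mul,
    integral_log_sub_log_one_sub_rpow hu (by linarith)]
  field_simp

theorem qdfcre_exponential (lam α : ℝ) (hlam : 0 < lam) (hα0 : 0 ≤ α) (hα1 : α ≤ 1) :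
    ∀ u ∈ Set.Ico (0:ℝ) 1,
      (1 / (1 - u)) *
          ∫ p in u..1,
            (1 - p) * (Real.log (1 - u) - Real.log (1 - p)) ^ α * (1 / (lam * (1 - p)))
        = Real.Gamma (α + 1) / lam :=
  qdfcre_exponential_general lam α hα0
end

section
/- For the re-scaled beta distribution with quantile function Q(u) = c(1 - (1-u)^{1/r}), r, c > 0, the Q-DFCRE equals r^α · c · (1-u)^{1/r} · Γ(α+1)/(r+1)^{α+1}. -/
/-! The substitution `1 - p = (1 - u) e^{-t}` maps `t ∈ (0, ∞)` onto `p ∈ (u, 1)` and turns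
`log (1 - u) - log (1 - p)` into `t`, so the integral of `(1 - p) ^ γ` against the `α`-th power
of this logarithm becomes the Gamma integral `(1 - u) ^ (γ + 1) ∫ t ^ α e^{-(γ + 1) t} dt`. The
rescaled beta quantile density makes the integrand `c / r` times such a term with `γ = 1 / r`. -/

open MeasureTheory Set Real

theorem image_one_sub_mul_exp_neg_Ioi {b : ℝ} (hb : 0 < b) :
    (fun t => 1 - b * exp (-t)) '' Ioi 0 = Ioo (1 - b) 1 := by
  ext p
  constructor
  · rintro ⟨t, ht, rfl⟩
    have : exp (-t) < 1 := exp_lt_one_iff.2 (neg_neg_of_pos ht)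
    constructor <;> nlinarith [exp_pos (-t)]
  · rintro ⟨hp1, hp2⟩
    have h1p : 0 < 1 - p := by linarith
    refine ⟨log (b / (1 - p)), log_pos ((one_lt_div h1p).2 (by linarith)), ?_⟩
    simp only [exp_neg, exp_log (div_pos hb h1p), inv_div]
    field_simp
    ring

theorem intervalIntegral_eq_integral_Ioi_comp_one_sub_mul_exp_neg {u : ℝ} (hu : u < 1)
    (g : ℝ → ℝ) :
    ∫ p in u..1, g p
      = ∫ t in Ioi 0, (1 - u) * exp (-t) * g (1 - (1 - u) * exp (-t)) := by
  have hb : 0 < 1 - u := sub_pos.2 hu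
  have hderiv : ∀ t ∈ Ioi (0:ℝ), HasDerivWithinAt (fun t => 1 - (1 - u) * exp (-t))
      ((1 - u) * exp (-t)) (Ioi 0) t := fun t _ => by
    simpa using (((hasDerivAt_neg t).exp.const_mul (1 - u)).const_sub 1).hasDerivWithinAt
  have hinj : InjOn (fun t => 1 - (1 - u) * exp (-t)) (Ioi 0) := by
    intro t₁ _ t₂ _ h
    simpa [hb.ne'] using h
  rw [intervalIntegral.integral_of_le hu.le, integral_Ioc_eq_integral_Ioo,
    ← sub_sub_cancel 1 u, ← image_one_sub_mul_exp_neg_Ioi hb, sub_sub_cancel,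
    integral_image_eq_integral_abs_deriv_smul measurableSet_Ioi hderiv hinj]
  refine setIntegral_congr_fun measurableSet_Ioi fun t _ => ?_
  rw [smul_eq_mul, abs_of_pos (by positivity)]

theorem integral_one_sub_rpow_mul_log_sub_log_rpow {u α γ : ℝ} (hu : u < 1) (hα : -1 < α)
    (hγ : -1 < γ) :
    ∫ p in u..1, (1 - p) ^ γ * (log (1 - u) - log (1 - p)) ^ α
      = (1 - u) ^ (γ + 1) * Gamma (α + 1) / (γ + 1) ^ (α + 1) := by
  have hb : 0 < 1 - u := sub_pos.2 hu
  have hpt : ∀ t ∈ Ioi (0:ℝ),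
      (1 - u) * exp (-t) * ((1 - (1 - (1 - u) * exp (-t))) ^ γ
          * (log (1 - u) - log (1 - (1 - (1 - u) * exp (-t)))) ^ α)
        = (1 - u) ^ (γ + 1) * (t ^ (α + 1 - 1) * exp (-((γ + 1) * t))) := fun t _ => by
    rw [sub_sub_cancel, log_mul hb.ne' (exp_pos _).ne', log_exp, mul_rpow hb.le (exp_pos _).le,
      rpow_add hb, rpow_one, ← exp_mul, add_sub_cancel_right,
      show -((γ + 1) * t) = -t + -t * γ by ring, exp_add]
    ring_nf
  rw [intervalIntegral_eq_integral_Ioi_comp_one_sub_mul_exp_neg hu,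
    setIntegral_congr_fun measurableSet_Ioi hpt, integral_const_mul,
    integral_rpow_mul_exp_neg_mul_Ioi (by linarith) (by linarith),
    one_div, inv_rpow (by linarith), div_eq_mul_inv]
  ring

theorem qdfcre_rescaled_beta_general (c r α : ℝ) (hr : 0 < r)
    (hα0 : 0 ≤ α) :
    ∀ u ∈ Set.Ico (0:ℝ) 1,
      (1 / (1 - u)) *
          ∫ p in u..1,
            (1 - p) * (Real.log (1 - u) - Real.log (1 - p)) ^ α *
              ((c / r) * (1 - p) ^ (1 / r - 1))
        = r ^ α * c * (1 - u) ^ (1 / r) * Real.Gamma (α + 1) / (r + 1) ^ (α + 1) := by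
  rintro u ⟨-, hu⟩
  have hb : 0 < 1 - u := sub_pos.2 hu
  have hintegrand : ∀ p ∈ uIcc u 1,
      (1 - p) * (log (1 - u) - log (1 - p)) ^ α * ((c / r) * (1 - p) ^ (1 / r - 1))
        = c / r * ((1 - p) ^ (1 / r) * (log (1 - u) - log (1 - p)) ^ α) := fun p hp => by
    have h1p : 0 ≤ 1 - p := sub_nonneg.2 (uIcc_of_le hu.le ▸ hp).2
    have hpow : (1 - p) * (1 - p) ^ (1 / r - 1) = (1 - p) ^ (1 / r) := by
      rw [← rpow_one_add' h1p (by simp [hr.ne'])]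
      ring_nf
    linear_combination c / r * (log (1 - u) - log (1 - p)) ^ α * hpow
  have hscale : (1 / r + 1) ^ (α + 1) = (r + 1) ^ (α + 1) / (r ^ α * r) := by
    rw [← rpow_add_one hr.ne', ← div_rpow (by positivity) hr.le]
    congr 1
    field_simp
    ring
  rw [intervalIntegral.integral_congr hintegrand, intervalIntegral.integral_const_mul,
    integral_one_sub_rpow_mul_log_sub_log_rpow hu (by linarith) (by linarith [one_div_pos.2 hr]),
    hscale, rpow_add_one hb.ne']
  field_simp

theorem qdfcre_rescaled_beta (c r α : ℝ) (hc : 0 < c) (hr : 0 < r)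
    (hα0 : 0 ≤ α) (hα1 : α ≤ 1) :
    ∀ u ∈ Set.Ico (0:ℝ) 1,
      (1 / (1 - u)) *
          ∫ p in u..1,
            (1 - p) * (Real.log (1 - u) - Real.log (1 - p)) ^ α *
              ((c / r) * (1 - p) ^ (1 / r - 1))
        = r ^ α * c * (1 - u) ^ (1 / r) * Real.Gamma (α + 1) / (r + 1) ^ (α + 1) :=
  qdfcre_rescaled_beta_general c r α hr hα0
end

section
/- If X has quantile function Q_X(u) = u^β (power distribution on [0,1], 0 < β < 1), then Y = 1/X has quantile function Q_Y(u) = (1-u)^{-β} (Pareto I), and the Q-FCRE of Y equals β·Γ(α+1)/(1-β)^{α+1}. -/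
/-!
Substituting `1 - p = exp (-t)` maps `(0, 1)` onto `(0, ∞)` and turns the integrand, together with
the Jacobian `exp (-t)`, into `β t ^ α exp (-(1 - β) t)`, whose integral is a Gamma integral.
-/

open MeasureTheory Set Real

theorem integral_comp_exp_neg_Ioi {E : Type*} [NormedAddCommGroup E] [NormedSpace ℝ E]
    (g : ℝ → E) : ∫ t in Ioi 0, exp (-t) • g (exp (-t)) = ∫ u in Ioo 0 1, g u := by
  have himage : (fun t => exp (-t)) '' Ioi 0 = Ioo 0 1 := by
    rw [← exp_zero, ← image_exp_Iio, ← image_image exp Neg.neg, image_neg_Ioi, neg_zero]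
  rw [← himage, integral_image_eq_integral_abs_deriv_smul measurableSet_Ioi
    (fun t _ => ((hasDerivAt_neg t).exp).hasDerivWithinAt)
    (exp_injective.comp neg_injective).injOn]
  simp [abs_of_pos (exp_pos _)]

theorem exp_neg_mul_pareto_qfcre_integrand (α β t : ℝ) :
    exp (-t) * (exp (-t) * (-log (exp (-t))) ^ α * (β * exp (-t) ^ (-β - 1)))
      = β * (t ^ (α + 1 - 1) * exp (-((1 - β) * t))) := by
  rw [log_exp, neg_neg, ← exp_mul, add_sub_cancel_right]
  calc _ = β * (t ^ α * (exp (-t) * exp (-t) * exp (-t * (-β - 1)))) := by ring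
    _ = _ := by rw [← exp_add, ← exp_add]; ring_nf

theorem qfcre_reciprocal_power_general (β α : ℝ) (hβ1 : β < 1)
    (hα0 : 0 ≤ α) :
    (∀ u ∈ Set.Ioo (0:ℝ) 1, 1 / ((1 - u) ^ β) = (1 - u) ^ (-β)) ∧
    ∫ p in (0:ℝ)..1,
        (1 - p) * (-Real.log (1 - p)) ^ α * (β * (1 - p) ^ (-β - 1))
      = β * Real.Gamma (α + 1) / (1 - β) ^ (α + 1) := by
  refine ⟨fun u hu => by rw [one_div, rpow_neg (sub_nonneg.2 hu.2.le)], ?_⟩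
  have h1β : 0 < 1 - β := sub_pos.2 hβ1
  rw [intervalIntegral.integral_comp_sub_left
      (fun u => u * (-log u) ^ α * (β * u ^ (-β - 1))),
    sub_self, sub_zero, intervalIntegral.integral_of_le zero_le_one,
    integral_Ioc_eq_integral_Ioo, ← integral_comp_exp_neg_Ioi]
  simp only [smul_eq_mul, exp_neg_mul_pareto_qfcre_integrand]
  rw [integral_const_mul, integral_rpow_mul_exp_neg_mul_Ioi (by linarith) h1β,
    div_rpow zero_le_one h1β.le, one_rpow]
  ring

theorem qfcre_reciprocal_power (β α : ℝ) (hβ0 : 0 < β) (hβ1 : β < 1)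
    (hα0 : 0 ≤ α) (hα1 : α ≤ 1) :
    (∀ u ∈ Set.Ioo (0:ℝ) 1, 1 / ((1 - u) ^ β) = (1 - u) ^ (-β)) ∧
    ∫ p in (0:ℝ)..1,
        (1 - p) * (-Real.log (1 - p)) ^ α * (β * (1 - p) ^ (-β - 1))
      = β * Real.Gamma (α + 1) / (1 - β) ^ (α + 1) :=
  qfcre_reciprocal_power_general β α hβ1 hα0
end
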